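/- arXiv:1107.4595 — 3 statements merged into one kernel-verified Lean document; each statement's English description precedes it below -/
import Mathlib

section
/- Let K be a field and ℓ a prime number different from the characteristic of K. Let a ∈ K^×, let n ≥ 1, and assume ζ_{ℓ^n} ∈ K. Then either K(ℓ^n√a) = K (i.e. a is an ℓ^n-th power in K^×), or there is a smallest integer h with 1 ≤ h ≤ n such that K(ℓ^h√a) ≠ K, and in the latter case [K(ℓ^n√a) : K] = ℓ^{n−h+1}. -/
noncomputable section
open IntermediateField Module

def cyclo (K : Type*) [Field K] (m : ℕ) : IntermediateField K (AlgebraicClosure K) :=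
  IntermediateField.adjoin K {ζ | IsPrimitiveRoot ζ m}

def cycloInf (K : Type*) [Field K] (ℓ : ℕ) : IntermediateField K (AlgebraicClosure K) :=
  ⨆ m : ℕ, cyclo K (ℓ ^ m)

def kroot (K : Type*) [Field K] (n : ℕ) (a : K) : IntermediateField K (AlgebraicClosure K) :=
  IntermediateField.adjoin K {x | x ^ n = algebraMap K (AlgebraicClosure K) a}

def kummerDeg (K : Type*) [Field K] (m n : ℕ) (a : K) : ℕ :=
  finrank (cyclo K m) (IntermediateField.adjoin (cyclo K m)
    {x : AlgebraicClosure K | x ^ n = algebraMap K (AlgebraicClosure K) a})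

def IsDivisible (K : Type*) [Field K] (ℓ : ℕ) (a : K) : Prop :=
  ∀ n : ℕ, ∃ c : K, c ^ ℓ ^ n = a

def StronglyIndivisible (K : Type*) [Field K] (ℓ : ℕ) (b : K) : Prop :=
  ∀ ξ : K, (∃ k : ℕ, 0 < k ∧ ξ ^ k = 1) → ∀ c : K, c ^ ℓ ≠ b * ξ

/-!
Let `h` be least with `a` not an `ℓ^h`-th power in `K`, and write `a = b ^ ℓ^(h-1)`; then `b` is not
an `ℓ`-th power, so by Kummer theory `X ^ ℓ^m - b` is irreducible for `m = n - h + 1` (for `ℓ = 2`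
this uses the square root of `-1` that `ζ_{ℓ^n}` provides once `m ≥ 2`). Since `ℓ^n = ℓ^m ℓ^(h-1)`
and `K` contains the `ℓ^n`-th roots of unity, any `ℓ^n`-th root `x` of `a` can be twisted by a root
of unity of `K` into an `ℓ^m`-th root `y` of `b`, and then `K(ℓ^n√a) = K(x) = K(y)` has degree `ℓ^m`.
-/

open Polynomial

theorem X_two_pow_sub_C_irreducible (m : ℕ) {K : Type*} [Field K] {i : K} (hi : i ^ 2 = -1)
    {b : K} (hb : ∀ c : K, c ^ 2 ≠ b) : Irreducible (X ^ 2 ^ m - C b) := by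
  induction m generalizing K i b with
  | zero => simpa using irreducible_X_sub_C b
  | succ m IH =>
    rw [pow_succ]
    apply X_pow_mul_sub_C_irreducible (X_pow_sub_C_irreducible_of_prime Nat.prime_two hb)
    intro E _ _ x hx
    have hint : IsIntegral K x := minpoly.ne_zero_iff.1 (hx ▸ X_pow_sub_C_ne_zero two_pos b)
    refine IH (i := algebraMap K _ i) (by rw [← map_pow, hi, map_neg, map_one]) fun c hc ↦ ?_
    -- `N(c) ^ 2 = N(√b) = -b`, so `i * N(c)` would be a square root of `b` in `K`.
    apply hb (i * Algebra.norm K c)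
    rw [mul_pow, hi, ← map_pow, hc, ← adjoin.powerBasis_gen hint,
      Algebra.PowerBasis.norm_gen_eq_coeff_zero_minpoly]
    simp [minpoly_gen, hx]

theorem X_pow_sub_C_irreducible_of_isPrimitiveRoot {K : Type*} [Field K] {p m : ℕ}
    (hp : p.Prime) {ζ : K} (hζ : IsPrimitiveRoot ζ (p ^ m)) {b : K} (hb : ∀ c : K, c ^ p ≠ b) :
    Irreducible (X ^ p ^ m - C b) := by
  rcases eq_or_ne p 2 with rfl | hp2
  · match m, hζ with
    | 0, _ => simpa using irreducible_X_sub_C b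
    | 1, _ => simpa using X_pow_sub_C_irreducible_of_prime hp hb
    | m + 2, hζ =>
      have hneg : ζ ^ 2 ^ (m + 1) = -1 :=
        (hζ.pow (by positivity) (pow_succ 2 (m + 1))).eq_neg_one_of_two_right
      exact X_two_pow_sub_C_irreducible _ (i := ζ ^ 2 ^ m) (by rw [← pow_mul, ← pow_succ, hneg]) hb
  · exact X_pow_sub_C_irreducible_of_prime_pow hp hp2 m hb

theorem exists_div_pow_eq_of_pow_mul_eq_pow {L : Type*} [Field L] {p q : ℕ} [NeZero (p * q)]
    {ζ : L} (hζ : IsPrimitiveRoot ζ (p * q)) {x b : L} (hb : b ≠ 0) (hx : x ^ (p * q) = b ^ q) :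
    ∃ k : ℕ, (x / ζ ^ k) ^ p = b := by
  have hq : NeZero q := .of_pos (Nat.pos_of_mul_pos_left (NeZero.pos (p * q)))
  have hx0 : x ^ p ≠ 0 := fun h ↦ pow_ne_zero q hb (by rw [← hx, pow_mul, h, zero_pow hq.ne])
  have hunit : (x ^ p / b) ^ q = 1 := by rw [div_pow, ← pow_mul, hx, div_self (pow_ne_zero q hb)]
  obtain ⟨k, -, hk⟩ := (hζ.pow (NeZero.pos _) rfl).eq_pow_of_pow_eq_one hunit
  exact ⟨k, by rw [div_pow, ← pow_mul, mul_comm, pow_mul, hk, div_div_cancel₀ hx0]⟩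

section

variable {K : Type*} [Field K] {M N : ℕ} [NeZero M] {ζ : K}

theorem kroot_eq_adjoin_simple (hζ : IsPrimitiveRoot ζ M) (hNM : N ∣ M) {a : K}
    {x : AlgebraicClosure K} (hx : x ^ N = algebraMap K _ a) : kroot K N a = K⟮x⟯ := by
  refine le_antisymm (adjoin_le_iff.2 fun z hz ↦ ?_) (adjoin_simple_le_iff.2 (subset_adjoin K _ hx))
  have hzx : z ^ N = x ^ N := hz.trans hx.symm
  obtain rfl | hx0 := eq_or_ne x 0
  · have hN : N ≠ 0 := fun h ↦ NeZero.ne M (Nat.eq_zero_of_zero_dvd (h ▸ hNM))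
    rw [zero_pow hN, pow_eq_zero_iff hN] at hzx
    rw [hzx]
    exact zero_mem _
  obtain ⟨d, rfl⟩ := hNM
  have hunit : (z / x) ^ (N * d) = 1 := by
    rw [pow_mul, div_pow, hzx, div_self (pow_ne_zero N hx0), one_pow]
  obtain ⟨j, -, hj⟩ := (hζ.map_of_injective (algebraMap K _).injective).eq_pow_of_pow_eq_one hunit
  rw [← div_mul_cancel₀ z hx0, ← hj, ← map_pow]
  exact mul_mem (IntermediateField.algebraMap_mem _ _) (mem_adjoin_simple_self K x)

theorem kroot_eq_bot_iff (hζ : IsPrimitiveRoot ζ M) (hNM : N ∣ M) {a : K} :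
    kroot K N a = ⊥ ↔ ∃ c : K, c ^ N = a := by
  constructor
  · obtain ⟨x, hx⟩ := IsAlgClosed.exists_pow_nat_eq (algebraMap K (AlgebraicClosure K) a)
      (Nat.pos_of_dvd_of_pos hNM (NeZero.pos M))
    rw [kroot_eq_adjoin_simple hζ hNM hx, adjoin_simple_eq_bot_iff, mem_bot]
    rintro ⟨c, rfl⟩
    exact ⟨c, (algebraMap K (AlgebraicClosure K)).injective (by rw [map_pow, hx])⟩
  · rintro ⟨c, rfl⟩
    rw [kroot_eq_adjoin_simple hζ hNM (map_pow (algebraMap K (AlgebraicClosure K)) c N).symm,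
      adjoin_simple_eq_bot_iff]
    exact IntermediateField.algebraMap_mem _ c

theorem finrank_kroot_of_irreducible {p q : ℕ} [NeZero (p * q)] (hζ : IsPrimitiveRoot ζ (p * q))
    {a b : K} (hirr : Irreducible (X ^ p - C b)) (hb : b ≠ 0) (hba : b ^ q = a) :
    finrank K (kroot K (p * q) a) = p := by
  set ι := algebraMap K (AlgebraicClosure K)
  obtain ⟨x, hx⟩ := IsAlgClosed.exists_pow_nat_eq (ι a) (NeZero.pos (p * q))
  obtain ⟨k, hy⟩ := exists_div_pow_eq_of_pow_mul_eq_pow (hζ.map_of_injective ι.injective)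
    ((map_ne_zero ι).2 hb) (by rw [hx, ← hba, map_pow])
  have hmin : minpoly K (x / ι ζ ^ k) = X ^ p - C b :=
    (minpoly.eq_of_irreducible_of_monic hirr (by simp [hy, ι])
      (monic_X_pow_sub_C b (left_ne_zero_of_mul (NeZero.ne (p * q))))).symm
  rw [kroot_eq_adjoin_simple hζ dvd_rfl (by rw [pow_mul, hy, ← hba, map_pow]),
    adjoin.finrank (Algebra.IsIntegral.isIntegral _), hmin, natDegree_X_pow_sub_C]

end

theorem stmt_3_general (K : Type*) [Field K] (ℓ : ℕ) (hℓ : ℓ.Prime)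
    (a : K) (n : ℕ)
    (hζ : ∃ ζ : K, IsPrimitiveRoot ζ (ℓ ^ n)) :
    kroot K (ℓ ^ n) a = ⊥ ∨
      ∃ h : ℕ, 1 ≤ h ∧ h ≤ n ∧ kroot K (ℓ ^ h) a ≠ ⊥ ∧
        (∀ h' : ℕ, 1 ≤ h' → h' < h → kroot K (ℓ ^ h') a = ⊥) ∧
        finrank K (kroot K (ℓ ^ n) a) = ℓ ^ (n - h + 1) := by
  classical
  obtain ⟨ζ, hζ⟩ := hζ
  have : NeZero ℓ := ⟨hℓ.ne_zero⟩
  have hroot : ∀ k ≤ n, kroot K (ℓ ^ k) a = ⊥ ↔ ∃ c : K, c ^ ℓ ^ k = a := fun k hk ↦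
    kroot_eq_bot_iff hζ (pow_dvd_pow ℓ hk)
  by_cases hfull : ∃ c : K, c ^ ℓ ^ n = a
  · exact .inl ((hroot n le_rfl).2 hfull)
  have hex : ∃ k, ¬∃ c : K, c ^ ℓ ^ k = a := ⟨n, hfull⟩
  obtain ⟨h, hfail, hmin⟩ : ∃ h, (¬∃ c : K, c ^ ℓ ^ h = a) ∧ ∀ k < h, ∃ c : K, c ^ ℓ ^ k = a :=
    ⟨Nat.find hex, Nat.find_spec hex, fun k hk ↦ not_not.1 (Nat.find_min hex hk)⟩
  have hh : 1 ≤ h := Nat.one_le_iff_ne_zero.2 (by rintro rfl; exact hfail ⟨a, by simp⟩)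
  have hhn : h ≤ n := not_lt.1 fun hnh ↦ hfull (hmin n hnh)
  obtain ⟨b, hba⟩ := hmin (h - 1) (by omega)
  have hb : ∀ c : K, c ^ ℓ ≠ b := fun c hc ↦ hfail
    ⟨c, by rw [← hba, ← hc, ← pow_mul, ← pow_succ', Nat.sub_add_cancel hh]⟩
  have hb0 : b ≠ 0 := fun h0 ↦ hb 0 (by rw [h0, zero_pow hℓ.ne_zero])
  have hsplit : ℓ ^ n = ℓ ^ (n - h + 1) * ℓ ^ (h - 1) := by rw [← pow_add]; congr 1; omega
  refine .inr ⟨h, hh, hhn, fun hbot ↦ hfail ((hroot h hhn).1 hbot),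
    fun h' _ hh' ↦ (hroot h' (by omega)).2 (hmin h' hh'), ?_⟩
  rw [hsplit] at hζ ⊢
  exact finrank_kroot_of_irreducible hζ (X_pow_sub_C_irreducible_of_isPrimitiveRoot hℓ
    (hζ.pow (NeZero.pos _) (mul_comm _ _)) hb) hb0 hba

theorem stmt_3 (K : Type*) [Field K] (ℓ : ℕ) (hℓ : ℓ.Prime) (hchar : (ℓ : K) ≠ 0)
    (a : K) (ha : a ≠ 0) (n : ℕ) (hn : 1 ≤ n)
    (hζ : ∃ ζ : K, IsPrimitiveRoot ζ (ℓ ^ n)) :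
    kroot K (ℓ ^ n) a = ⊥ ∨
      ∃ h : ℕ, 1 ≤ h ∧ h ≤ n ∧ kroot K (ℓ ^ h) a ≠ ⊥ ∧
        (∀ h' : ℕ, 1 ≤ h' → h' < h → kroot K (ℓ ^ h') a = ⊥) ∧
        finrank K (kroot K (ℓ ^ n) a) = ℓ ^ (n - h + 1) :=
  stmt_3_general K ℓ hℓ a n hζ
end
end

section
/- Let K be a field and ℓ a prime number different from the characteristic of K. Assume that K ≠ K_ℓ or K = K_{ℓ^∞}. Then for every a ∈ K^×, either a is divisible in K, or a = b^{ℓ^d} for some integer d ≥ 0 and some b ∈ K^× which is strongly indivisible; moreover the integer d does not depend on the choice of such b. -/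
noncomputable section
open IntermediateField Module

/-!
Every root of unity of `K` is an `ℓ`-th power: its prime-to-`ℓ` part always is, and its `ℓ`-part
is either trivial (when `K` has no primitive `ℓ`-th root of unity) or a power of `ζ ^ ℓ` for a
primitive `ℓ ^ (s + 1)`-th root of unity `ζ`. Hence if `a` is not divisible and `a = b ^ ℓ ^ d` with
`d` maximal, then `b` is strongly indivisible, because any `c ^ ℓ = b ξ` would give the `ℓ`-th root
`c / e` of `b`, where `e ^ ℓ = ξ`. For uniqueness, if `b ^ ℓ ^ d = b' ^ ℓ ^ d'` with `d' < d`, then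
`b'` and `(b ^ ℓ ^ (d - d' - 1)) ^ ℓ` have the same `ℓ ^ d'`-th power, so they differ by a root of
unity, contradicting the strong indivisibility of `b'`.
-/

theorem exists_pow_eq_of_coprime_of_pow_eq {G : Type*} [CommGroup G] {x : G} {ℓ a b : ℕ}
    (hab : a.Coprime b) (ha : ∃ c, c ^ ℓ = x ^ a) (hb : ∃ c, c ^ ℓ = x ^ b) :
    ∃ c, c ^ ℓ = x := by
  obtain ⟨c, hc⟩ := ha
  obtain ⟨e, he⟩ := hb
  obtain ⟨u, v, huv⟩ := Nat.isCoprime_iff_coprime.2 hab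
  refine ⟨c ^ u * e ^ v, ?_⟩
  calc (c ^ u * e ^ v) ^ ℓ = (c ^ ℓ) ^ u * (e ^ ℓ) ^ v := by
        rw [mul_pow, ← zpow_natCast, ← zpow_natCast, ← zpow_natCast c, ← zpow_natCast e,
          ← zpow_mul, ← zpow_mul, ← zpow_mul, ← zpow_mul, mul_comm u, mul_comm v]
    _ = x ^ (u * a + v * b : ℤ) := by rw [hc, he]; group
    _ = x := by rw [huv, zpow_one]

theorem exists_pow_eq_of_coprime_orderOf {M : Type*} [Monoid M] {x : M} {ℓ : ℕ}
    (h : ℓ.Coprime (orderOf x)) : ∃ c, c ^ ℓ = x := by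
  obtain ⟨m, hm⟩ := exists_pow_eq_self_of_coprime h
  exact ⟨x ^ m, by rw [← pow_mul, mul_comm, pow_mul, hm]⟩

theorem coprime_orderOf_of_not_exists_isPrimitiveRoot {M : Type*} [CommMonoid M] {ℓ : ℕ}
    (hℓ : ℓ.Prime) (hno : ¬ ∃ ζ : M, IsPrimitiveRoot ζ ℓ) {x : M} (hx : IsOfFinOrder x) :
    ℓ.Coprime (orderOf x) := by
  rw [hℓ.coprime_iff_not_dvd]
  rintro ⟨k, hk⟩
  exact hno ⟨x ^ k, (IsPrimitiveRoot.orderOf x).pow hx.orderOf_pos (by rw [hk, mul_comm])⟩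

theorem Units.exists_pow_eq_of_isOfFinOrder {R : Type*} [CommRing R] [IsDomain R] {ℓ : ℕ}
    (hℓ : ℓ.Prime) (hprim : ∀ m : ℕ, ∃ ζ : R, IsPrimitiveRoot ζ (ℓ ^ m)) {x : Rˣ}
    (hx : IsOfFinOrder x) : ∃ c, c ^ ℓ = x := by
  set s := (orderOf x).factorization ℓ
  set t := orderOf x / ℓ ^ s
  have hst : ℓ ^ s * t = orderOf x := Nat.ordProj_mul_ordCompl_eq_self _ ℓ
  have hcop : ℓ.Coprime t :=
    hℓ.coprime_iff_not_dvd.2 (Nat.not_dvd_ordCompl hℓ hx.orderOf_pos.ne')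
  refine exists_pow_eq_of_coprime_of_pow_eq (hcop.pow_left s) ?_ ?_
  · refine exists_pow_eq_of_coprime_orderOf
      (hcop.coprime_dvd_right (orderOf_dvd_of_pow_eq_one ?_))
    rw [← pow_mul, hst, pow_orderOf_eq_one]
  · obtain ⟨ζ, hζ⟩ := hprim (s + 1)
    lift ζ to Rˣ using hζ.isUnit (pow_ne_zero _ hℓ.ne_zero)
    have hζℓ : IsPrimitiveRoot (ζ ^ ℓ) (ℓ ^ s) :=
      (IsPrimitiveRoot.coe_units_iff.1 hζ).pow (pow_pos hℓ.pos _) (pow_succ' ℓ s)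
    have : NeZero (ℓ ^ s) := ⟨pow_ne_zero _ hℓ.ne_zero⟩
    obtain ⟨i, -, hi⟩ := hζℓ.eq_pow_of_mem_rootsOfUnity (k := ℓ ^ s) (ξ := x ^ t) <| by
      rw [mem_rootsOfUnity, ← pow_mul, mul_comm, hst, pow_orderOf_eq_one]
    exact ⟨ζ ^ i, by rw [← hi, pow_right_comm]⟩

theorem exists_pow_eq_of_pow_eq_one {K : Type*} [Field K] {ℓ : ℕ} (hℓ : ℓ.Prime)
    (hK : (¬ ∃ ζ : K, IsPrimitiveRoot ζ ℓ) ∨ (∀ m : ℕ, ∃ ζ : K, IsPrimitiveRoot ζ (ℓ ^ m)))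
    {ξ : K} {k : ℕ} (hk : 0 < k) (hξ : ξ ^ k = 1) : ∃ c, c ^ ℓ = ξ := by
  lift ξ to Kˣ using .of_pow_eq_one hξ hk.ne'
  have hfin : IsOfFinOrder ξ :=
    isOfFinOrder_iff_pow_eq_one.2 ⟨k, hk, Units.ext (by simpa using hξ)⟩
  obtain ⟨c, rfl⟩ : ∃ c, c ^ ℓ = ξ := by
    rcases hK with hno | hprim
    · refine exists_pow_eq_of_coprime_orderOf
        (coprime_orderOf_of_not_exists_isPrimitiveRoot hℓ ?_ hfin)
      rintro ⟨ζ, hζ⟩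
      exact hno ⟨ζ, IsPrimitiveRoot.coe_units_iff.2 hζ⟩
    · exact Units.exists_pow_eq_of_isOfFinOrder hℓ hprim hfin
  exact ⟨c, by simp⟩

theorem exists_pow_pow_eq_forall_pow_ne {M : Type*} [Monoid M] {ℓ : ℕ} {a : M}
    (h : ¬ ∀ n : ℕ, ∃ c : M, c ^ ℓ ^ n = a) :
    ∃ d : ℕ, ∃ b : M, b ^ ℓ ^ d = a ∧ ∀ c : M, c ^ ℓ ≠ b := by
  push Not at h
  classical
  obtain ⟨d, hd⟩ : ∃ d, Nat.find h = d + 1 :=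
    Nat.exists_eq_succ_of_ne_zero fun h0 => Nat.find_spec h a (by rw [h0, pow_zero, pow_one])
  obtain ⟨b, hb⟩ : ∃ b : M, b ^ ℓ ^ d = a := by
    simpa using Nat.find_min h (show d < Nat.find h by omega)
  refine ⟨d, b, hb, fun c hc => Nat.find_spec h c ?_⟩
  rw [hd, pow_succ', pow_mul, hc, hb]

theorem stronglyIndivisible_of_forall_pow_ne {K : Type*} [Field K] {ℓ : ℕ}
    (hroots : ∀ ξ : K, (∃ k : ℕ, 0 < k ∧ ξ ^ k = 1) → ∃ e : K, e ^ ℓ = ξ) {b : K}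
    (hb : ∀ c : K, c ^ ℓ ≠ b) : StronglyIndivisible K ℓ b := by
  rintro ξ hξ c hc
  obtain ⟨e, rfl⟩ := hroots ξ hξ
  have he : e ^ ℓ ≠ 0 := by
    obtain ⟨k, hk, h1⟩ := hξ
    rintro h0
    rw [h0, zero_pow hk.ne'] at h1
    exact zero_ne_one h1
  exact hb (c / e) (by rw [div_pow, hc, mul_div_cancel_right₀ _ he])

namespace StronglyIndivisible

variable {K : Type*} [Field K] {ℓ : ℕ} {b b' : K}

theorem ne_zero (hℓ : ℓ ≠ 0) (hb : StronglyIndivisible K ℓ b) : b ≠ 0 := by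
  rintro rfl
  exact hb 1 ⟨1, one_pos, one_pow 1⟩ 0 (by rw [zero_pow hℓ, zero_mul])

theorem pow_ne_pow_pow (hℓ : ℓ ≠ 0) (hb : StronglyIndivisible K ℓ b) (c : K) {N : ℕ}
    (hN : N ≠ 0) : b ^ N ≠ (c ^ ℓ) ^ N := by
  intro h
  have hb0 := hb.ne_zero hℓ
  refine hb (c ^ ℓ / b) ⟨N, Nat.pos_of_ne_zero hN, ?_⟩ c (mul_div_cancel₀ _ hb0).symm
  rw [div_pow, ← h, div_self (pow_ne_zero _ hb0)]

theorem le_of_pow_pow_eq (hℓ : ℓ ≠ 0) (hb' : StronglyIndivisible K ℓ b') {d d' : ℕ}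
    (h : b ^ ℓ ^ d = b' ^ ℓ ^ d') : d ≤ d' := by
  by_contra! hlt
  obtain ⟨k, rfl⟩ : ∃ k, d = d' + k + 1 := ⟨d - d' - 1, by omega⟩
  refine hb'.pow_ne_pow_pow hℓ (b ^ ℓ ^ k) (pow_ne_zero d' hℓ) ?_
  rw [← h]
  ring

theorem eq_of_pow_pow_eq (hℓ : ℓ ≠ 0) (hb : StronglyIndivisible K ℓ b)
    (hb' : StronglyIndivisible K ℓ b') {d d' : ℕ} (h : b ^ ℓ ^ d = b' ^ ℓ ^ d') : d = d' :=
  le_antisymm (hb'.le_of_pow_pow_eq hℓ h) (hb.le_of_pow_pow_eq hℓ h.symm)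

end StronglyIndivisible

theorem stmt_4_general (K : Type*) [Field K] (ℓ : ℕ) (hℓ : ℓ.Prime)
    (hK : (¬ ∃ ζ : K, IsPrimitiveRoot ζ ℓ) ∨ (∀ m : ℕ, ∃ ζ : K, IsPrimitiveRoot ζ (ℓ ^ m)))
    (a : K) :
    IsDivisible K ℓ a ∨
      ∃ d : ℕ, (∃ b : K, StronglyIndivisible K ℓ b ∧ a = b ^ ℓ ^ d) ∧
        ∀ d' : ℕ, ∀ b' : K, StronglyIndivisible K ℓ b' → a = b' ^ ℓ ^ d' → d' = d := by
  by_cases hdiv : IsDivisible K ℓ a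
  · exact Or.inl hdiv
  obtain ⟨d, b, rfl, hb⟩ := exists_pow_pow_eq_forall_pow_ne hdiv
  have hsi : StronglyIndivisible K ℓ b :=
    stronglyIndivisible_of_forall_pow_ne
      (fun _ ⟨_, hk, hξ⟩ => exists_pow_eq_of_pow_eq_one hℓ hK hk hξ) hb
  exact Or.inr ⟨d, ⟨b, hsi, rfl⟩, fun d' b' hb' h => hb'.eq_of_pow_pow_eq hℓ.ne_zero hsi h.symm⟩

theorem stmt_4 (K : Type*) [Field K] (ℓ : ℕ) (hℓ : ℓ.Prime) (hchar : (ℓ : K) ≠ 0)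
    (hK : (¬ ∃ ζ : K, IsPrimitiveRoot ζ ℓ) ∨ (∀ m : ℕ, ∃ ζ : K, IsPrimitiveRoot ζ (ℓ ^ m)))
    (a : K) (ha : a ≠ 0) :
    IsDivisible K ℓ a ∨
      ∃ d : ℕ, (∃ b : K, StronglyIndivisible K ℓ b ∧ a = b ^ ℓ ^ d) ∧
        ∀ d' : ℕ, ∀ b' : K, StronglyIndivisible K ℓ b' → a = b' ^ ℓ ^ d' → d' = d :=
  stmt_4_general K ℓ hℓ hK a
end
end

section
/- Let K be a field and ℓ an odd prime number different from the characteristic of K, with K ≠ K_{ℓ^∞}. Then the degree [K_ℓ : K] divides ℓ − 1. If K_ℓ ≠ K_{ℓ^∞}, and t ≥ 1 is the greatest integer such that K_ℓ = K_{ℓ^t}, then for every m ≥ 2 one has [K_{ℓ^m} : K] = [K_ℓ : K] · ℓ^{max(0, m−t)}. If K_ℓ = K_{ℓ^∞}, then [K_{ℓ^m} : K] = [K_ℓ : K] for every m ≥ 2. -/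
/-!
The automorphisms of `K(ζₙ)/K` act faithfully on `ζₙ` through `(ℤ/n)ˣ`, so `[K_ℓ : K]` divides
`φ(ℓ) = ℓ - 1`. For the growth of the tower, let `t ≥ 1` be such that `K_{ℓ^t} ≠ K_{ℓ^{t+1}}`.
Then `ζ_{ℓ^t}` is not an `ℓ`-th power in `F = K_{ℓ^t}`: an `ℓ`-th root of it in `F` would be a
primitive `ℓ^{t+1}`-th root of unity. Since `ℓ` is odd, `X^{ℓ^d} - ζ_{ℓ^t}` is therefore
irreducible over `F`, and `ζ_{ℓ^{t+d}}` is a root of it, so `[K_{ℓ^{t+d}} : F] = ℓ^d`.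
-/

noncomputable section
open IntermediateField Module

theorem IsPrimitiveRoot.of_pow_prime {M : Type*} [CommMonoid M] {p t : ℕ} [Fact p.Prime] {x : M}
    (ht : 0 < t) (h : IsPrimitiveRoot (x ^ p) (p ^ t)) : IsPrimitiveRoot x (p ^ (t + 1)) := by
  obtain ⟨s, rfl⟩ := Nat.exists_eq_succ_of_ne_zero ht.ne'
  have hfin : x ^ p ^ (s + 1 + 1) = 1 := by
    rw [pow_succ', pow_mul, h.pow_eq_one]
  have hnot : ¬x ^ p ^ (s + 1) = 1 := by
    rw [pow_succ', pow_mul]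
    exact h.pow_ne_one_of_pos_of_lt (pow_ne_zero s (Fact.out : p.Prime).ne_zero)
      (Nat.pow_lt_pow_succ (Fact.out : p.Prime).one_lt)
  rw [← orderOf_eq_prime_pow hnot hfin]
  exact IsPrimitiveRoot.orderOf x

theorem finrank_adjoin_eq_of_pow_prime_pow_eq {F L : Type*} [Field F] [Field L] [Algebra F L]
    {p : ℕ} (hp : p.Prime) (hp2 : p ≠ 2) {a : F} (ha : ∀ b : F, b ^ p ≠ a) {x : L} {d : ℕ}
    (hx : x ^ p ^ d = algebraMap F L a) : finrank F F⟮x⟯ = p ^ d := by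
  have hirr := X_pow_sub_C_irreducible_of_prime_pow hp hp2 d ha
  have hmonic := Polynomial.monic_X_pow_sub_C a (pow_ne_zero d hp.ne_zero)
  have hroot : Polynomial.aeval x (Polynomial.X ^ p ^ d - Polynomial.C a) = 0 := by
    simp [hx]
  rw [adjoin.finrank ⟨_, hmonic, hroot⟩, ← minpoly.eq_of_irreducible_of_monic hirr hroot hmonic,
    Polynomial.natDegree_X_pow_sub_C]

section cyclo

variable {K : Type*} [Field K]

theorem exists_isPrimitiveRoot_algebraicClosure {n : ℕ} (hn : (n : K) ≠ 0) :
    ∃ ζ : AlgebraicClosure K, IsPrimitiveRoot ζ n :=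
  have : NeZero (n : K) := ⟨hn⟩
  HasEnoughRootsOfUnity.exists_primitiveRoot _ n

theorem cyclo_eq_adjoin_simple {n : ℕ} [NeZero n] {ζ : AlgebraicClosure K}
    (hζ : IsPrimitiveRoot ζ n) : cyclo K n = K⟮ζ⟯ := by
  refine le_antisymm ?_ (adjoin_simple_le_iff.mpr (subset_adjoin K _ hζ))
  rw [cyclo, adjoin_le_iff]
  intro x hx
  obtain ⟨i, -, rfl⟩ := hζ.eq_pow_of_pow_eq_one hx.pow_eq_one
  exact pow_mem (mem_adjoin_simple_self K ζ) i

theorem cyclo_mono_of_dvd {m n : ℕ} (hn : (n : K) ≠ 0) (hmn : m ∣ n) :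
    cyclo K m ≤ cyclo K n := by
  obtain ⟨ζ, hζ⟩ := exists_isPrimitiveRoot_algebraicClosure hn
  have hn0 : n ≠ 0 := by rintro rfl; exact hn Nat.cast_zero
  have : NeZero m := ⟨fun hm => hn0 (Nat.eq_zero_of_zero_dvd (hm ▸ hmn))⟩
  have hζm : IsPrimitiveRoot (ζ ^ (n / m)) m :=
    hζ.pow (Nat.pos_of_ne_zero hn0) (Nat.div_mul_cancel hmn).symm
  rw [cyclo_eq_adjoin_simple hζm]
  exact adjoin_simple_le_iff.mpr (pow_mem (show ζ ∈ cyclo K n from subset_adjoin K _ hζ) _)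

theorem finrank_cyclo_dvd_totient {n : ℕ} (hn : (n : K) ≠ 0) :
    finrank K (cyclo K n) ∣ n.totient := by
  obtain ⟨ζ, hζ⟩ := exists_isPrimitiveRoot_algebraicClosure hn
  have : NeZero n := ⟨by rintro rfl; exact hn Nat.cast_zero⟩
  have : IsCyclotomicExtension {n} K K⟮ζ⟯ := hζ.intermediateField_adjoin_isCyclotomicExtension K
  have : FiniteDimensional K K⟮ζ⟯ := IsCyclotomicExtension.finiteDimensional {n} K _
  have : IsGalois K K⟮ζ⟯ := IsCyclotomicExtension.isGalois {n} K _
  rw [cyclo_eq_adjoin_simple hζ, ← IsGalois.card_aut_eq_finrank, ← ZMod.card_units_eq_totient,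
    ← Nat.card_eq_fintype_card]
  exact Subgroup.card_dvd_of_injective _
    ((IsCyclotomicExtension.zeta_spec (n := n) K K⟮ζ⟯).autToPow_injective K)

theorem finrank_cyclo_prime_pow_add {ℓ : ℕ} (hℓ : ℓ.Prime) (hℓ2 : ℓ ≠ 2) (hchar : (ℓ : K) ≠ 0)
    {t : ℕ} (ht : 0 < t) (hsucc : cyclo K (ℓ ^ (t + 1)) ≠ cyclo K (ℓ ^ t)) (d : ℕ) :
    finrank K (cyclo K (ℓ ^ (t + d))) = finrank K (cyclo K (ℓ ^ t)) * ℓ ^ d := by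
  have : Fact ℓ.Prime := ⟨hℓ⟩
  have : NeZero ℓ := ⟨hℓ.ne_zero⟩
  have hcharPow (k : ℕ) : ((ℓ ^ k : ℕ) : K) ≠ 0 := by exact_mod_cast pow_ne_zero k hchar
  set F := cyclo K (ℓ ^ t)
  obtain ⟨ζ, hζ⟩ := exists_isPrimitiveRoot_algebraicClosure (hcharPow (t + d))
  have hζt : IsPrimitiveRoot (ζ ^ ℓ ^ d) (ℓ ^ t) := hζ.pow (pow_pos hℓ.pos _) (by ring)
  have hnotpow : ∀ b : F, b ^ ℓ ≠ ⟨_, subset_adjoin K _ hζt⟩ := by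
    intro b hb
    have hb : IsPrimitiveRoot ((b : AlgebraicClosure K) ^ ℓ) (ℓ ^ t) := by
      rwa [← SubmonoidClass.coe_pow, hb]
    refine hsucc (le_antisymm ?_ (cyclo_mono_of_dvd (hcharPow _) (pow_dvd_pow ℓ t.le_succ)))
    rw [cyclo_eq_adjoin_simple (hb.of_pow_prime ht)]
    exact adjoin_simple_le_iff.mpr b.2
  have hFζ : finrank F F⟮ζ⟯ = ℓ ^ d :=
    finrank_adjoin_eq_of_pow_prime_pow_eq hℓ hℓ2 hnotpow rfl
  have hFle : F ≤ K⟮ζ⟯ :=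
    cyclo_eq_adjoin_simple hζ ▸ cyclo_mono_of_dvd (hcharPow _) (pow_dvd_pow ℓ (t.le_add_right d))
  have hres : F⟮ζ⟯.restrictScalars K = cyclo K (ℓ ^ (t + d)) := by
    rw [restrictScalars_adjoin_eq_sup, cyclo_eq_adjoin_simple hζ, sup_eq_right.mpr hFle]
  rw [← hres, ← hFζ]
  exact (finrank_mul_finrank K F F⟮ζ⟯).symm

end cyclo

theorem stmt_6_general (K : Type*) [Field K] (ℓ : ℕ) (hℓ : ℓ.Prime) (hodd : Odd ℓ)
    (hchar : (ℓ : K) ≠ 0) :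
    finrank K (cyclo K ℓ) ∣ ℓ - 1 ∧
    (∀ t : ℕ, 1 ≤ t → cyclo K (ℓ ^ t) = cyclo K ℓ →
      (∀ u : ℕ, cyclo K (ℓ ^ u) = cyclo K ℓ → u ≤ t) →
      cyclo K ℓ ≠ cycloInf K ℓ →
      ∀ m : ℕ, 2 ≤ m →
        finrank K (cyclo K (ℓ ^ m)) = finrank K (cyclo K ℓ) * ℓ ^ (m - t)) ∧
    (cyclo K ℓ = cycloInf K ℓ →
      ∀ m : ℕ, 2 ≤ m → finrank K (cyclo K (ℓ ^ m)) = finrank K (cyclo K ℓ)) := by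
  have hmono {a b : ℕ} (hab : a ≤ b) : cyclo K (ℓ ^ a) ≤ cyclo K (ℓ ^ b) :=
    cyclo_mono_of_dvd (by exact_mod_cast pow_ne_zero b hchar) (pow_dvd_pow ℓ hab)
  have hcyclo_le (m : ℕ) (hm : 1 ≤ m) : cyclo K ℓ ≤ cyclo K (ℓ ^ m) := by
    simpa only [pow_one] using hmono hm
  refine ⟨?_, ?_, ?_⟩
  · simpa [Nat.totient_prime hℓ] using finrank_cyclo_dvd_totient hchar
  · intro t ht heq hmax _ m hm
    rcases le_total t m with htm | hmt
    · obtain ⟨d, rfl⟩ := Nat.exists_eq_add_of_le htm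
      have hsucc : cyclo K (ℓ ^ (t + 1)) ≠ cyclo K (ℓ ^ t) := fun h => by
        have := hmax (t + 1) (h.trans heq)
        omega
      have hℓ2 : ℓ ≠ 2 := by rintro rfl; norm_num at hodd
      rw [finrank_cyclo_prime_pow_add hℓ hℓ2 hchar ht hsucc d, heq, Nat.add_sub_cancel_left]
    · rw [le_antisymm ((hmono hmt).trans heq.le) (hcyclo_le m (by omega)),
        Nat.sub_eq_zero_of_le hmt, pow_zero, mul_one]
  · intro hinf m hm
    rw [le_antisymm ((le_iSup (fun k => cyclo K (ℓ ^ k)) m).trans hinf.ge) (hcyclo_le m (by omega))]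

theorem stmt_6 (K : Type*) [Field K] (ℓ : ℕ) (hℓ : ℓ.Prime) (hodd : Odd ℓ)
    (hchar : (ℓ : K) ≠ 0) (hKinf : cycloInf K ℓ ≠ ⊥) :
    finrank K (cyclo K ℓ) ∣ ℓ - 1 ∧
    (∀ t : ℕ, 1 ≤ t → cyclo K (ℓ ^ t) = cyclo K ℓ →
      (∀ u : ℕ, cyclo K (ℓ ^ u) = cyclo K ℓ → u ≤ t) →
      cyclo K ℓ ≠ cycloInf K ℓ →
      ∀ m : ℕ, 2 ≤ m →
        finrank K (cyclo K (ℓ ^ m)) = finrank K (cyclo K ℓ) * ℓ ^ (m - t)) ∧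
    (cyclo K ℓ = cycloInf K ℓ →
      ∀ m : ℕ, 2 ≤ m → finrank K (cyclo K (ℓ ^ m)) = finrank K (cyclo K ℓ)) :=
  stmt_6_general K ℓ hℓ hodd hchar
end
end
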